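/- Let (N,v) be a game, C a feasible collection (X_C(v) ≠ ∅), and x ∈ X_C(v). Then ζ(x) ≠ ∅ if and only if there exists a coalition S ∈ C such that the collection C ∪ { {i} : i ∈ S } contains no balanced subcollection on N (i.e., is unbalanced). -/

import Mathlib

open Finset

variable {α : Type*} [Fintype α] [DecidableEq α]

/-- Sum of the payments of the players in coalition `S`. -/
def coalSum (x : α → ℝ) (S : Finset α) : ℝ := ∑ i ∈ S, x i

/-- `B` is a balanced collection on `M` with weights `w`. -/
def IsBalancedOn (M : Finset α) (B : Finset (Finset α)) (w : Finset α → ℝ) : Prop :=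
  (∀ S ∈ B, S.Nonempty ∧ S ⊆ M ∧ 0 < w S) ∧
  (∀ i ∈ M, ∑ S ∈ B.filter (fun S => i ∈ S), w S = 1)

/-- The game `v` is balanced. -/
def BalancedGame (v : Finset α → ℝ) : Prop :=
  ∀ B w, IsBalancedOn (univ : Finset α) B w → ∑ S ∈ B, w S * v S ≤ v univ

/-- `x` is a preimputation of the game `v`. -/
def Preimp (v : Finset α → ℝ) (x : α → ℝ) : Prop := coalSum x univ = v univ

/-- `y` dominates `x` via the coalition `S`. -/
def Dominates (v : Finset α → ℝ) (y x : α → ℝ) (S : Finset α) : Prop :=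
  coalSum y S ≤ v S ∧ ∀ i ∈ S, x i < y i

/-- `x` belongs to the core of the game `v`. -/
def InCore (v : Finset α → ℝ) (x : α → ℝ) : Prop :=
  Preimp v x ∧ ∀ S : Finset α, S.Nonempty → v S ≤ coalSum x S

/-- The collection of coalitions unsatisfied at `x`. -/
def phi (v : Finset α → ℝ) (x : α → ℝ) : Set (Finset α) :=
  {S | S.Nonempty ∧ coalSum x S < v S}

/-- The domination cone of `x` with respect to `S`. -/
def domCone (v : Finset α → ℝ) (S : Finset α) (x : α → ℝ) : Set (α → ℝ) :=
  {y | Preimp v y ∧ ∀ i ∈ S, x i < y i}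

/-- The augmentation cone of `x`. -/
def Aug (v : Finset α → ℝ) (x : α → ℝ) : Set (α → ℝ) :=
  {y | Preimp v y ∧ ∀ S ∈ phi v x, coalSum x S ≤ coalSum y S}

def zeta (v : Finset α → ℝ) (x : α → ℝ) : Set (α → ℝ) :=
  Aug v x ∩ ⋃ S ∈ phi v x, domCone v S x

/-!
If `y ∈ ζ(x)` dominates `x` via `S` and `B ⊆ C ∪ {{i} : i ∈ S}` is balanced with weights `w`, then
`∑ w_T (y(T) - x(T)) = y(N) - x(N) = 0` although every term is nonnegative and the terms of
singletons of `S` are positive; hence `B ⊆ C`, and `x(T) < v(T)` on `C` contradicts the balancedness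
of the game.

Conversely, for `i ∈ S` Farkas' lemma yields `z` with `z(N) = 0`, `z(T) ≥ 0` on
`C ∪ {{j} : j ∈ S}` and `z_i > 0`: a certificate that no such `z` exists is a nonnegative
combination of indicator vectors of the collection, one of them `{i}`, that is constant on `N`,
i.e. a balanced subcollection. Then `x + ∑_{i ∈ S} z_i ∈ ζ(x)`. Farkas' lemma needs finitely
generated cones to be closed, which follows from the conic Carathéodory theorem.
-/

section ConicHull

variable {ι E : Type*} [AddCommGroup E] [Module ℝ E]

def conicHull (A : Finset ι) (f : ι → E) : Set E :=
  {v | ∃ c : ι → ℝ, (∀ a ∈ A, 0 ≤ c a) ∧ ∑ a ∈ A, c a • f a = v}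

lemma conicHull_mono {A B : Finset ι} (hAB : A ⊆ B) (f : ι → E) :
    conicHull A f ⊆ conicHull B f := by
  classical
  rintro v ⟨c, hc, rfl⟩
  refine ⟨fun a => if a ∈ A then c a else 0, fun a _ => ?_, ?_⟩
  · dsimp only
    split_ifs with ha
    exacts [hc a ha, le_rfl]
  · rw [← sum_subset hAB fun a _ ha => by simp [ha]]
    exact sum_congr rfl fun a ha => by simp [ha]

/-- Move along the dependence `d` until the first coefficient `c a₀` with `d a₀ > 0` vanishes. -/
lemma exists_erase_mem_conicHull_of_dependence [DecidableEq ι] {A : Finset ι} {f : ι → E}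
    {v : E} (hv : v ∈ conicHull A f) {d : ι → ℝ} (hd : ∑ a ∈ A, d a • f a = 0)
    (hpos : ∃ a ∈ A, 0 < d a) : ∃ a₀ ∈ A, v ∈ conicHull (A.erase a₀) f := by
  obtain ⟨c, hc, rfl⟩ := hv
  obtain ⟨a₀, ha₀, hmin⟩ := (A.filter (0 < d ·)).exists_min_image (fun a => c a / d a)
    (by simpa [Finset.Nonempty] using hpos)
  rw [mem_filter] at ha₀
  set t := c a₀ / d a₀
  have hnonneg : ∀ a ∈ A, 0 ≤ c a - t * d a := by
    intro a ha
    rcases lt_or_ge 0 (d a) with hda | hda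
    · have := hmin a (mem_filter.2 ⟨ha, hda⟩)
      rw [le_div_iff₀ hda] at this
      linarith
    · nlinarith [hc a ha, div_nonneg (hc a₀ ha₀.1) ha₀.2.le]
  have hzero : c a₀ - t * d a₀ = 0 := by
    rw [div_mul_cancel₀ _ ha₀.2.ne', sub_self]
  refine ⟨a₀, ha₀.1, fun a => c a - t * d a, fun a ha => hnonneg a (mem_of_mem_erase ha), ?_⟩
  rw [sum_erase A (by simp only [hzero, zero_smul])]
  simp only [sub_smul, sum_sub_distrib, mul_smul, ← smul_sum, hd, smul_zero, sub_zero]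

lemma exists_erase_mem_conicHull [DecidableEq ι] {A : Finset ι} {f : ι → E} {v : E}
    (hv : v ∈ conicHull A f) (hA : ¬ LinearIndepOn ℝ f (A : Set ι)) :
    ∃ a₀ ∈ A, v ∈ conicHull (A.erase a₀) f := by
  rw [linearIndepOn_finset_iff] at hA
  push Not at hA
  obtain ⟨d, hd, a, ha, hda⟩ := hA
  rcases hda.lt_or_gt with hneg | hpos
  · refine exists_erase_mem_conicHull_of_dependence hv (d := -d) ?_ ⟨a, ha, by simpa using hneg⟩
    simp [neg_smul, hd]
  · exact exists_erase_mem_conicHull_of_dependence hv hd ⟨a, ha, hpos⟩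

theorem exists_linearIndepOn_mem_conicHull {A : Finset ι} {f : ι → E} {v : E}
    (hv : v ∈ conicHull A f) : ∃ B ⊆ A, LinearIndepOn ℝ f (B : Set ι) ∧ v ∈ conicHull B f := by
  classical
  induction A using Finset.strongInduction with
  | _ A ih =>
    by_cases hA : LinearIndepOn ℝ f (A : Set ι)
    · exact ⟨A, subset_rfl, hA, hv⟩
    obtain ⟨a₀, ha₀, hv'⟩ := exists_erase_mem_conicHull hv hA
    obtain ⟨B, hB, hBind, hvB⟩ := ih _ (erase_ssubset ha₀) hv'
    exact ⟨B, hB.trans (erase_subset _ _), hBind, hvB⟩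

lemma conicHull_eq_image (A : Finset ι) (f : ι → E) :
    conicHull A f =
      Fintype.linearCombination ℝ (fun a : (A : Set ι) => f a) '' Set.Ici 0 := by
  classical
  ext v
  simp only [conicHull, Set.mem_ofPred_eq, Set.mem_image, Set.mem_Ici,
    Fintype.linearCombination_apply]
  constructor
  · rintro ⟨c, hc, rfl⟩
    exact ⟨fun a => c a, fun a => hc a a.2, sum_coe_sort A fun a => c a • f a⟩
  · rintro ⟨c, hc, rfl⟩
    refine ⟨fun a => if h : a ∈ A then c ⟨a, h⟩ else 0,
      fun a ha => by simpa [ha] using hc ⟨a, ha⟩, ?_⟩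
    rw [← sum_coe_sort A]
    exact sum_congr rfl fun a _ => by simp

end ConicHull

section Farkas

variable {ι E : Type*} [NormedAddCommGroup E] [NormedSpace ℝ E]

lemma isClosed_conicHull_of_linearIndepOn {A : Finset ι} {f : ι → E}
    (hA : LinearIndepOn ℝ f (A : Set ι)) : IsClosed (conicHull A f) := by
  rw [conicHull_eq_image]
  refine (LinearMap.isClosedEmbedding_of_injective ?_).isClosedMap _ isClosed_Ici
  rw [LinearMap.ker_eq_bot']
  intro c hc
  exact funext (Fintype.linearIndependent_iff.1 hA c hc)

theorem isClosed_conicHull [FiniteDimensional ℝ E] (A : Finset ι) (f : ι → E) :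
    IsClosed (conicHull A f) := by
  have : conicHull A f =
      ⋃ B ∈ {B : Finset ι | B ⊆ A ∧ LinearIndepOn ℝ f (B : Set ι)}, conicHull B f := by
    ext v
    simp only [Set.mem_iUnion, Set.mem_ofPred_eq, exists_prop, and_assoc]
    exact ⟨exists_linearIndepOn_mem_conicHull, fun ⟨B, hB, _, hv⟩ => conicHull_mono hB f hv⟩
  rw [this]
  refine Set.Finite.isClosed_biUnion ?_ fun B hB => isClosed_conicHull_of_linearIndepOn hB.2
  exact A.powerset.finite_toSet.subset fun B hB => mem_powerset.2 hB.1

def ProperCone.conicHull [FiniteDimensional ℝ E] (A : Finset ι) (f : ι → E) : ProperCone ℝ E where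
  carrier := _root_.conicHull A f
  add_mem' := by
    rintro _ _ ⟨c, hc, rfl⟩ ⟨c', hc', rfl⟩
    exact ⟨c + c', fun a ha => add_nonneg (hc a ha) (hc' a ha), by
      simp only [Pi.add_apply, add_smul, sum_add_distrib]⟩
  zero_mem' := ⟨0, fun _ _ => le_rfl, by simp⟩
  smul_mem' := by
    rintro ⟨t, ht⟩ _ ⟨c, hc, rfl⟩
    exact ⟨t • c, fun a ha => mul_nonneg ht (hc a ha), by
      simp only [Pi.smul_apply, smul_eq_mul, mul_smul, ← smul_sum]; rfl⟩
  isClosed' := isClosed_conicHull A f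

theorem mem_conicHull_or_exists_dual_neg [FiniteDimensional ℝ E] (A : Finset ι) (f : ι → E)
    (b : E) :
    b ∈ conicHull A f ∨ ∃ φ : StrongDual ℝ E, (∀ a ∈ A, 0 ≤ φ (f a)) ∧ φ b < 0 := by
  classical
  refine or_iff_not_imp_left.2 fun hb => ?_
  obtain ⟨φ, hφ, hφb⟩ := (ProperCone.conicHull A f).hyperplane_separation_point hb
  refine ⟨φ, fun a ha => hφ _ ⟨Pi.single a 1, fun b _ => ?_, by simp [Pi.single_apply, ha]⟩, hφb⟩
  by_cases hb : b = a <;> simp [hb]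

end Farkas

section Game

variable {v : Finset α → ℝ} {x : α → ℝ}

def IsUnbalanced (𝒟 : Set (Finset α)) : Prop :=
  ¬ ∃ (B : Finset (Finset α)) (w : Finset α → ℝ),
    (↑B : Set (Finset α)) ⊆ 𝒟 ∧ B.Nonempty ∧ IsBalancedOn univ B w

lemma IsBalancedOn.sum_mul_coalSum {B : Finset (Finset α)} {w : Finset α → ℝ}
    (hB : IsBalancedOn univ B w) (z : α → ℝ) :
    ∑ T ∈ B, w T * coalSum z T = coalSum z univ := by
  calc ∑ T ∈ B, w T * coalSum z T
      = ∑ T ∈ B, ∑ k, if k ∈ T then w T * z k else 0 := by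
        refine sum_congr rfl fun T _ => ?_
        rw [sum_ite_mem, univ_inter, coalSum, mul_sum]
    _ = ∑ k, (∑ T ∈ B with k ∈ T, w T) * z k := by
        rw [sum_comm]
        exact sum_congr rfl fun k _ => by rw [sum_mul, sum_filter]
    _ = coalSum z univ := sum_congr rfl fun k hk => by rw [hB.2 k hk, one_mul]

lemma BalancedGame.not_isBalancedOn_of_subset_phi (hv : BalancedGame v) (hx : Preimp v x)
    {B : Finset (Finset α)} (hBx : (↑B : Set (Finset α)) ⊆ phi v x) (hB : B.Nonempty)
    (w : Finset α → ℝ) : ¬ IsBalancedOn univ B w := by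
  intro hBw
  have hlt : ∑ T ∈ B, w T * coalSum x T < ∑ T ∈ B, w T * v T :=
    sum_lt_sum_of_nonempty hB fun T hT => mul_lt_mul_of_pos_left (hBx hT).2 (hBw.1 T hT).2.2
  rw [hBw.sum_mul_coalSum, hx] at hlt
  exact (hv B w hBw).not_gt hlt

lemma isBalancedOn_of_forall_sum_eq {D : Finset (Finset α)} (hD : ∀ T ∈ D, T.Nonempty)
    {lam : Finset α → ℝ} (hlam : ∀ T ∈ D, 0 ≤ lam T) {T₀ : Finset α} (hT₀ : T₀ ∈ D)
    (hpos : 0 < lam T₀) {γ : ℝ} (hγ : ∀ k, ∑ T ∈ D with k ∈ T, lam T = γ) :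
    IsBalancedOn univ (D.filter (lam · ≠ 0)) (fun T => lam T / γ) := by
  have hγpos : 0 < γ := by
    obtain ⟨k, hk⟩ := hD T₀ hT₀
    rw [← hγ k]
    exact hpos.trans_le <| single_le_sum (fun T hT => hlam T (mem_filter.1 hT).1)
      (mem_filter.2 ⟨hT₀, hk⟩)
  refine ⟨fun T hT => ?_, fun k _ => ?_⟩
  · rw [mem_filter] at hT
    exact ⟨hD T hT.1, subset_univ T, div_pos ((hlam T hT.1).lt_of_ne' hT.2) hγpos⟩
  · rw [← sum_div, filter_comm, sum_filter_ne_zero, hγ k, div_self hγpos.ne']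

/-- `some T` is the indicator vector of `T` and `none` is `-1`; by Farkas' lemma, cones spanned by
these vectors are dual to systems `z(N) ≤ 0`, `z(T) ≥ 0`. -/
def coalitionVec : Option (Finset α) → α → ℝ :=
  fun o => o.elim (-1) fun T k => if k ∈ T then 1 else 0

lemma neg_single_notMem_conicHull {D : Finset (Finset α)} (hD : ∀ T ∈ D, T.Nonempty)
    (hDu : IsUnbalanced (D : Set (Finset α))) {i : α} (hi : {i} ∈ D) :
    -Pi.single i 1 ∉ conicHull (insertNone D) coalitionVec := by
  rintro ⟨c, hc, hcb⟩
  set lam : Finset α → ℝ := fun T => c (some T) + if T = {i} then 1 else 0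
  have hlam : ∀ T ∈ D, 0 ≤ lam T := fun T hT => add_nonneg
    (hc _ (some_mem_insertNone.2 hT)) (by split_ifs <;> norm_num)
  have hlami : 0 < lam {i} := by
    simp only [lam, if_true]
    linarith [hc _ (some_mem_insertNone.2 hi)]
  have hsum : ∀ k, ∑ T ∈ D with k ∈ T, lam T = c none := by
    intro k
    have hk := congrFun hcb k
    simp only [sum_insertNone, Finset.sum_apply, Pi.smul_apply, coalitionVec, Option.elim,
      Pi.neg_apply, Pi.one_apply, smul_eq_mul, mul_ite, mul_one, mul_zero, Pi.single_apply] at hk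
    rw [sum_add_distrib, sum_filter, sum_ite_eq']
    simp only [mem_filter, hi, mem_singleton, true_and]
    linarith
  exact hDu ⟨D.filter (lam · ≠ 0), fun T => lam T / c none, fun T hT => (mem_filter.1 hT).1,
    ⟨{i}, mem_filter.2 ⟨hi, hlami.ne'⟩⟩,
    isBalancedOn_of_forall_sum_eq hD hlam hi hlami hsum⟩

lemma exists_improvement_of_dual_nonneg {D : Finset (Finset α)} {φ : StrongDual ℝ (α → ℝ)}
    (hφ : ∀ a ∈ insertNone D, 0 ≤ φ (coalitionVec a)) {i : α} (hφi : φ (-Pi.single i 1) < 0) :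
    ∃ z : α → ℝ, coalSum z univ = 0 ∧ (∀ T ∈ D, 0 ≤ coalSum z T) ∧ 0 < z i := by
  obtain ⟨z, hφz⟩ : ∃ z : α → ℝ, ∀ g, φ g = ∑ k, g k * z k :=
    ⟨fun k => φ (Pi.single k 1), fun g => by
      conv_lhs => rw [← Finset.univ_sum_single g]
      simp only [map_sum]
      refine sum_congr rfl fun k _ => ?_
      rw [← smul_eq_mul, ← map_smul, ← Pi.single_smul, smul_eq_mul, mul_one]⟩
  have hzD : ∀ T ∈ D, 0 ≤ coalSum z T := fun T hT => by
    simpa [hφz, coalitionVec, coalSum, sum_ite_mem] using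
      hφ (some T) (some_mem_insertNone.2 hT)
  have hz : coalSum z univ ≤ 0 := by
    simpa [hφz, coalitionVec, coalSum] using hφ none none_mem_insertNone
  have hzi : 0 < z i := by simpa [hφz, Pi.single_apply] using hφi
  -- put the slack `-z(N) ≥ 0` on player `i`
  refine ⟨z + Pi.single i (-coalSum z univ), ?_, fun T hT => ?_, ?_⟩
  · simp [coalSum, sum_add_distrib]
  · have hzT := hzD T hT
    simp only [coalSum, Pi.add_apply, sum_add_distrib, sum_pi_single'] at hz hzT ⊢
    split_ifs <;> linarith
  · simp only [Pi.add_apply, Pi.single_eq_same]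
    linarith

lemma exists_improvement_of_isUnbalanced {𝒟 : Set (Finset α)} (hne : ∀ T ∈ 𝒟, T.Nonempty)
    (h𝒟 : IsUnbalanced 𝒟) {i : α} (hi : {i} ∈ 𝒟) :
    ∃ z : α → ℝ, coalSum z univ = 0 ∧ (∀ T ∈ 𝒟, 0 ≤ coalSum z T) ∧ 0 < z i := by
  obtain ⟨D, rfl⟩ := 𝒟.toFinite.exists_finset_coe
  rcases mem_conicHull_or_exists_dual_neg (insertNone D) coalitionVec (-Pi.single i 1) with
    hmem | ⟨φ, hφ, hφi⟩
  · exact absurd hmem (neg_single_notMem_conicHull hne h𝒟 hi)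
  · exact exists_improvement_of_dual_nonneg hφ hφi

lemma isUnbalanced_of_mem_aug_of_mem_domCone (hv : BalancedGame v) (hx : Preimp v x)
    {y : α → ℝ} (hy : y ∈ Aug v x) {S : Finset α} (hyS : y ∈ domCone v S x) :
    IsUnbalanced (phi v x ∪ (fun i => ({i} : Finset α)) '' ↑S) := by
  rintro ⟨B, w, hBsub, hB, hBw⟩
  have hzero : ∑ T ∈ B, w T * (coalSum y T - coalSum x T) = 0 := by
    simp only [mul_sub, sum_sub_distrib, hBw.sum_mul_coalSum]
    exact sub_eq_zero.2 (hy.1.trans hx.symm)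
  have hsingle : ∀ j ∈ S, 0 < coalSum y {j} - coalSum x {j} := fun j hj => by
    simpa [coalSum] using hyS.2 j hj
  have hnonneg : ∀ T ∈ B, 0 ≤ w T * (coalSum y T - coalSum x T) := by
    intro T hT
    refine mul_nonneg (hBw.1 T hT).2.2.le ?_
    rcases hBsub hT with hTx | ⟨j, hj, rfl⟩
    exacts [sub_nonneg.2 (hy.2 T hTx), (hsingle j hj).le]
  by_cases hBS : ∃ j ∈ S, {j} ∈ B
  · obtain ⟨j, hj, hjB⟩ := hBS
    have := sum_pos' hnonneg ⟨{j}, hjB, mul_pos (hBw.1 _ hjB).2.2 (hsingle j hj)⟩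
    linarith
  · refine hv.not_isBalancedOn_of_subset_phi hx (fun T hT => ?_) hB w hBw
    rcases hBsub hT with hTx | ⟨j, hj, rfl⟩
    exacts [hTx, absurd ⟨j, hj, hT⟩ hBS]

lemma zeta_nonempty_of_isUnbalanced (hx : Preimp v x) {S : Finset α} (hS : S ∈ phi v x)
    (hSu : IsUnbalanced (phi v x ∪ (fun i => ({i} : Finset α)) '' ↑S)) : (zeta v x).Nonempty := by
  have hne : ∀ T ∈ phi v x ∪ (fun i => ({i} : Finset α)) '' ↑S, T.Nonempty := by
    rintro T (hT | ⟨j, -, rfl⟩)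
    exacts [hT.1, singleton_nonempty j]
  choose! z hzN hzT hzi using fun i (hi : i ∈ S) =>
    exists_improvement_of_isUnbalanced hne hSu (Or.inr ⟨i, hi, rfl⟩)
  have hcoal : ∀ T, coalSum (x + ∑ i ∈ S, z i) T = coalSum x T + ∑ i ∈ S, coalSum (z i) T := by
    intro T
    simp only [coalSum, Pi.add_apply, Finset.sum_apply, sum_add_distrib]
    rw [sum_comm]
  have hpre : Preimp v (x + ∑ i ∈ S, z i) := by
    rw [Preimp, hcoal, sum_eq_zero hzN, add_zero, hx]
  refine ⟨x + ∑ i ∈ S, z i, ⟨hpre, fun T hT => ?_⟩, Set.mem_biUnion hS ⟨hpre, fun j hj => ?_⟩⟩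
  · rw [hcoal]
    exact le_add_of_nonneg_right (sum_nonneg fun i hi => hzT i hi T (Or.inl hT))
  · have hzj : ∀ i ∈ S, 0 ≤ z i j := fun i hi => by
      simpa [coalSum] using hzT i hi {j} (Or.inr ⟨j, hj, rfl⟩)
    simp only [Pi.add_apply, Finset.sum_apply]
    linarith [sum_pos' hzj ⟨j, hj, hzi j hj⟩]

end Game

theorem stmt_11 (v : Finset α → ℝ) (hbal : BalancedGame v)
    (C : Set (Finset α)) (x : α → ℝ) (hx : Preimp v x) (hxC : phi v x = C) :
    (zeta v x).Nonempty ↔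
      ∃ S ∈ C, ¬ ∃ (B : Finset (Finset α)) (w : Finset α → ℝ),
        (↑B : Set (Finset α)) ⊆ C ∪ ((fun i => ({i} : Finset α)) '' ↑S) ∧
        B.Nonempty ∧ IsBalancedOn (univ : Finset α) B w := by
  subst hxC
  constructor
  · rintro ⟨y, hyAug, hyζ⟩
    obtain ⟨S, hS, hyS⟩ := Set.mem_iUnion₂.1 hyζ
    exact ⟨S, hS, isUnbalanced_of_mem_aug_of_mem_domCone hbal hx hyAug hyS⟩
  · rintro ⟨S, hS, hSu⟩
    exact zeta_nonempty_of_isUnbalanced hx hS hSu
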